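/- Let α ∈ ℂ and let y : ℂ → ℂ be holomorphic. Define, for ζ ∈ ℂ∖{0} and t ∈ ℂ, A(ζ,t) = −4iζ²·σ₃ + 4y(t)ζ·σ₁ − 2y′(t)·σ₂ − i(2y(t)²+t)·σ₃ − (α/ζ)·σ₁ and U(ζ,t) = −iζ·σ₃ + y(t)·σ₁, where σ₁ = [[0,1],[1,0]], σ₂ = [[0,−i],[i,0]], σ₃ = [[1,0],[0,−1]]. Then the zero-curvature equation ∂A/∂t − ∂U/∂ζ + A·U − U·A = 0 holds for all ζ ∈ ℂ∖{0} and t ∈ ℂ if and only if y″(t) = 2y(t)³ + t·y(t) + α for all t ∈ ℂ. -/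

import Mathlib

/-! Written in the Pauli basis, `∂ₜA` and `∂_ζU = -iσ₃` are combinations of the `σₖ`, and the
commutator `[A, U]` cancels all their `σ₁`- and `σ₃`-components; for the pole term this uses
`(α / ζ) · ζ = α`, which is where `ζ ≠ 0` enters. What survives is `2 (2y³ + ty + α - y″) σ₂`,
so the curvature vanishes exactly when `y` solves Painlevé II. -/

open Matrix Complex

noncomputable section

def σ₁ : Matrix (Fin 2) (Fin 2) ℂ := !![0, 1; 1, 0]
def σ₂ : Matrix (Fin 2) (Fin 2) ℂ := !![0, -Complex.I; Complex.I, 0]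
def σ₃ : Matrix (Fin 2) (Fin 2) ℂ := !![1, 0; 0, -1]

/-- The `ζ`-coefficient matrix of the Flaschka–Newell pair `FN` with parameter `α`. -/
def A₇ (α : ℂ) (y : ℂ → ℂ) (ζ t : ℂ) : Matrix (Fin 2) (Fin 2) ℂ :=
  (-4*Complex.I*ζ^2) • σ₃ + (4*(y t)*ζ) • σ₁ + (-2*deriv y t) • σ₂
    + (-(Complex.I*(2*(y t)^2 + t))) • σ₃ + (-(α/ζ)) • σ₁

/-- The `t`-coefficient matrix of the Flaschka–Newell pair `FN`. -/
def U₇ (y : ℂ → ℂ) (ζ t : ℂ) : Matrix (Fin 2) (Fin 2) ℂ :=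
  (-Complex.I*ζ) • σ₃ + (y t) • σ₁

def zeroCurvature {n : Type*} [Fintype n] (A U : ℂ → ℂ → Matrix n n ℂ) (ζ t : ℂ) :
    Matrix n n ℂ :=
  (Matrix.of fun i j => deriv (fun s => A ζ s i j) t)
    - (Matrix.of fun i j => deriv (fun w => U w t i j) ζ) + A ζ t * U ζ t - U ζ t * A ζ t

lemma σ₂_ne_zero : σ₂ ≠ 0 := fun h => by
  simpa [σ₂] using congrFun (congrFun h 0) 1

lemma A₇_apply (α : ℂ) (y : ℂ → ℂ) (ζ s : ℂ) (i j : Fin 2) :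
    A₇ α y ζ s i j = (-4 * I * ζ ^ 2 - I * (2 * y s ^ 2 + s)) * σ₃ i j
      + (4 * y s * ζ - α / ζ) * σ₁ i j + (-2 * deriv y s) * σ₂ i j := by
  simp only [A₇, Matrix.add_apply, Matrix.smul_apply, smul_eq_mul]
  ring

lemma U₇_apply (y : ℂ → ℂ) (w s : ℂ) (i j : Fin 2) :
    U₇ y w s i j = (-I * w) * σ₃ i j + y s * σ₁ i j := by
  simp only [U₇, Matrix.add_apply, Matrix.smul_apply, smul_eq_mul]

lemma deriv_A₇_apply (α : ℂ) {y : ℂ → ℂ} (hy : Differentiable ℂ y) (ζ t : ℂ) (i j : Fin 2) :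
    deriv (fun s => A₇ α y ζ s i j) t = -I * (4 * y t * deriv y t + 1) * σ₃ i j
      + 4 * deriv y t * ζ * σ₁ i j + (-2 * deriv (deriv y) t) * σ₂ i j := by
  have hy' := (hy t).hasDerivAt
  have hy'' := (hy.deriv t).hasDerivAt
  simp only [A₇_apply]
  have h₃ : HasDerivAt (fun s => -4 * I * ζ ^ 2 - I * (2 * y s ^ 2 + s))
      (-I * (4 * y t * deriv y t + 1)) t := by
    refine ((hasDerivAt_const t _).sub (((hy'.pow 2).const_mul 2).add (hasDerivAt_id t)
      |>.const_mul I)).congr_deriv ?_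
    push_cast
    ring
  have h₁ : HasDerivAt (fun s => 4 * y s * ζ - α / ζ) (4 * deriv y t * ζ) t := by
    simpa using ((hy'.const_mul 4).mul_const ζ).sub_const (α / ζ)
  exact ((h₃.mul_const _).add (h₁.mul_const _) |>.add ((hy''.const_mul (-2)).mul_const _)).deriv

lemma deriv_U₇_apply (y : ℂ → ℂ) (ζ t : ℂ) (i j : Fin 2) :
    deriv (fun w => U₇ y w t i j) ζ = -I * σ₃ i j := by
  simp only [U₇_apply]
  exact ((((hasDerivAt_id' ζ).const_mul (-I)).mul_const _).add_const _).deriv.trans (by ring)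

lemma zeroCurvature_A₇_U₇ (α : ℂ) {y : ℂ → ℂ} (hy : Differentiable ℂ y) {ζ : ℂ} (hζ : ζ ≠ 0)
    (t : ℂ) : zeroCurvature (A₇ α y) (U₇ y) ζ t
      = (2 * (2 * y t ^ 3 + t * y t + α - deriv (deriv y) t)) • σ₂ := by
  ext i j
  simp only [zeroCurvature, Matrix.sub_apply, Matrix.add_apply, of_apply, deriv_A₇_apply α hy,
    deriv_U₇_apply]
  simp only [mul_apply, Fin.sum_univ_two, A₇_apply, U₇_apply, Matrix.smul_apply, smul_eq_mul]
  fin_cases i <;> fin_cases j <;>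
    simp only [σ₁, σ₂, σ₃, Fin.isValue, Fin.zero_eta, Fin.mk_one, of_apply, cons_val',
      cons_val_zero, cons_val_one, cons_val_fin_one] <;> field_simp
  · ring
  · linear_combination (4 * deriv y t * ζ ^ 2) * I_sq
  · linear_combination (4 * deriv y t * ζ ^ 2) * I_sq
  · ring

/-- The zero-curvature equation for the Flaschka–Newell pair holds for all `ζ ≠ 0`
and all `t` iff `y` solves the second Painlevé equation with parameter `α`. -/
theorem stmt_7 (α : ℂ) (y : ℂ → ℂ) (hy : Differentiable ℂ y) :
    (∀ ζ : ℂ, ζ ≠ 0 → ∀ t : ℂ,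
      (Matrix.of fun i j => deriv (fun s => A₇ α y ζ s i j) t)
        - (Matrix.of fun i j => deriv (fun w => U₇ y w t i j) ζ)
        + A₇ α y ζ t * U₇ y ζ t - U₇ y ζ t * A₇ α y ζ t = 0)
    ↔ (∀ t : ℂ, deriv (deriv y) t = 2*(y t)^3 + t*(y t) + α) := by
  change (∀ ζ : ℂ, ζ ≠ 0 → ∀ t, zeroCurvature (A₇ α y) (U₇ y) ζ t = 0) ↔ _
  constructor
  · intro h t
    have h₁ := h 1 one_ne_zero t
    rw [zeroCurvature_A₇_U₇ α hy one_ne_zero, smul_eq_zero, or_iff_left σ₂_ne_zero] at h₁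
    linear_combination -h₁ / 2
  · intro h ζ hζ t
    rw [zeroCurvature_A₇_U₇ α hy hζ, h t, sub_self, mul_zero, zero_smul]
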